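/- arXiv:2411.07514 — 8 statements merged into one kernel-verified Lean document; each statement's English description precedes it below -/
import Mathlib

section
/- Let 𝒳 be a finite nonempty set, P₀ ∈ Δ(𝒳), ℓ : 𝒳 → ℝ, and ξ ≥ 0. Then the infimum of E_P[ℓ] over all P ∈ Δ(𝒳) with TV(P, P₀) ≤ ξ equals the supremum over λ ∈ ℝ of λ − E_{P₀}[(λ − ℓ)₊] − ξ·max_{x∈𝒳}(λ − ℓ(x))₊; moreover both the infimum and the supremum are attained. -/
/-!
Weak duality: pointwise `ℓ ≥ λ - (λ - ℓ)₊`, and replacing `P₀` by `P` raises `E[(λ - ℓ)₊]` by at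
most `TV(P, P₀) · max (λ - ℓ)₊`. For strong duality, take a `ξ`-upper quantile `t` of `ℓ` under
`P₀` (or `t = min ℓ` when `ξ ≥ 1`): the primal optimum removes from `P₀` all its mass where
`ℓ > t` and a fraction of its mass where `ℓ = t`, in total `ξ`, and puts it on a minimiser of `ℓ`;
then `λ = t` is dual optimal, by complementary slackness.
-/

open Finset

section

variable {X : Type*} [Fintype X]

noncomputable def tvDual [Nonempty X] (P₀ l : X → ℝ) (ξ lam : ℝ) : ℝ :=
  lam - (∑ x, P₀ x * max (lam - l x) 0)
    - ξ * univ.sup' univ_nonempty (fun x => max (lam - l x) 0)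

def InTVBall (P₀ : X → ℝ) (ξ : ℝ) (P : X → ℝ) : Prop :=
  (∀ x, 0 ≤ P x) ∧ ∑ x, P x = 1 ∧ (∑ x, |P x - P₀ x|) / 2 ≤ ξ

lemma max_sub_zero_eq_add_max_sub_zero (a b : ℝ) : max (a - b) 0 = a - b + max (b - a) 0 := by
  rcases le_total a b with h | h <;> simp [h]

lemma sum_max_sub_zero_eq_half_sum_abs {P P₀ : X → ℝ} (h : ∑ x, P x = ∑ x, P₀ x) :
    ∑ x, max (P x - P₀ x) 0 = (∑ x, |P x - P₀ x|) / 2 := by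
  have hpt : ∀ a : ℝ, max a 0 = (|a| + a) / 2 := fun a => by
    rcases le_total a 0 with ha | ha <;> simp [ha, abs_of_nonpos, abs_of_nonneg]
  simp only [hpt, ← sum_div, sum_add_distrib, sum_sub_distrib, h, sub_self, add_zero]

lemma sum_sub_mul_le_of_tv_le {P₀ P f : X → ℝ} {ξ M : ℝ} (hsum : ∑ x, P x = ∑ x, P₀ x)
    (htv : (∑ x, |P x - P₀ x|) / 2 ≤ ξ) (hf0 : ∀ x, 0 ≤ f x) (hfM : ∀ x, f x ≤ M) (hM : 0 ≤ M) :
    ∑ x, (P x - P₀ x) * f x ≤ ξ * M :=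
  calc ∑ x, (P x - P₀ x) * f x ≤ ∑ x, max (P x - P₀ x) 0 * M :=
        sum_le_sum fun x _ => mul_le_mul (le_max_left _ _) (hfM x) (hf0 x) (le_max_right _ _)
    _ = (∑ x, |P x - P₀ x|) / 2 * M := by
        rw [← sum_mul, sum_max_sub_zero_eq_half_sum_abs hsum]
    _ ≤ ξ * M := mul_le_mul_of_nonneg_right htv hM

lemma tvDual_le_of_inTVBall [Nonempty X] {P₀ P l : X → ℝ} {ξ : ℝ} (hP₀1 : ∑ x, P₀ x = 1)
    (hP : InTVBall P₀ ξ P) (lam : ℝ) : tvDual P₀ l ξ lam ≤ ∑ x, P x * l x := by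
  set f := fun x => max (lam - l x) 0
  have hfM : ∀ x, f x ≤ univ.sup' univ_nonempty f := fun x => le_sup' f (mem_univ x)
  have hshift := sum_sub_mul_le_of_tv_le (hP.2.1.trans hP₀1.symm) hP.2.2
    (fun x => le_max_right _ _) hfM ((le_max_right _ _).trans (hfM (Classical.arbitrary X)))
  have hlam : lam ≤ ∑ x, P x * l x + ∑ x, P x * f x :=
    calc lam = ∑ x, P x * lam := by rw [← sum_mul, hP.2.1, one_mul]
      _ ≤ ∑ x, (P x * l x + P x * f x) := sum_le_sum fun x _ => by
          rw [← mul_add]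
          exact mul_le_mul_of_nonneg_left (by linarith [le_max_left (lam - l x) 0]) (hP.1 x)
      _ = _ := sum_add_distrib
  simp only [sub_mul, sum_sub_distrib] at hshift
  unfold tvDual
  linarith

lemma isLeast_isGreatest_of_tvDual_eq [Nonempty X] {P₀ P l : X → ℝ} {ξ lam : ℝ}
    (hP₀1 : ∑ x, P₀ x = 1) (hP : InTVBall P₀ ξ P) (heq : ∑ x, P x * l x = tvDual P₀ l ξ lam) :
    IsLeast {w | ∃ Q : X → ℝ, (∀ x, 0 ≤ Q x) ∧ (∑ x, Q x = 1) ∧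
        (∑ x, |Q x - P₀ x|) / 2 ≤ ξ ∧ w = ∑ x, Q x * l x} (∑ x, P x * l x) ∧
      IsGreatest {w | ∃ lam, w = tvDual P₀ l ξ lam} (∑ x, P x * l x) := by
  refine ⟨⟨⟨P, hP.1, hP.2.1, hP.2.2, rfl⟩, ?_⟩, ⟨⟨lam, heq⟩, ?_⟩⟩
  · rintro _ ⟨Q, hQ0, hQ1, hQ, rfl⟩
    exact heq ▸ tvDual_le_of_inTVBall hP₀1 ⟨hQ0, hQ1, hQ⟩ lam
  · rintro _ ⟨lam', rfl⟩
    exact tvDual_le_of_inTVBall hP₀1 hP lam'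

def moveMass [DecidableEq X] (P₀ w : X → ℝ) (x₀ : X) : X → ℝ :=
  fun x => P₀ x * (1 - w x) + (Pi.single x₀ (∑ y, P₀ y * w y) : X → ℝ) x

lemma moveMass_inTVBall [DecidableEq X] {P₀ w : X → ℝ} {ξ : ℝ} (x₀ : X) (hP₀0 : ∀ x, 0 ≤ P₀ x)
    (hP₀1 : ∑ x, P₀ x = 1) (hw0 : ∀ x, 0 ≤ w x) (hw1 : ∀ x, w x ≤ 1)
    (hq : ∑ x, P₀ x * w x ≤ ξ) : InTVBall P₀ ξ (moveMass P₀ w x₀) := by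
  set q := ∑ x, P₀ x * w x
  have hq0 : 0 ≤ q := sum_nonneg fun x _ => mul_nonneg (hP₀0 x) (hw0 x)
  have hsingle : ∑ x, (Pi.single x₀ q : X → ℝ) x = q := by simp
  have hsingle0 : ∀ x, 0 ≤ (Pi.single x₀ q : X → ℝ) x := fun x => by
    rw [Pi.single_apply]; split_ifs <;> simp [hq0]
  refine ⟨fun x => add_nonneg (mul_nonneg (hP₀0 x) (sub_nonneg.2 (hw1 x))) (hsingle0 x), ?_, ?_⟩
  · change ∑ x, (P₀ x * (1 - w x) + (Pi.single x₀ q : X → ℝ) x) = 1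
    simp only [mul_sub, mul_one, sum_add_distrib, sum_sub_distrib, hsingle, hP₀1]
    ring
  · have hdist : ∀ x, |moveMass P₀ w x₀ x - P₀ x| ≤ (Pi.single x₀ q : X → ℝ) x + P₀ x * w x :=
      fun x => by
        rw [moveMass, show ∀ a b c : ℝ, a * (1 - b) + c - a = c - a * b by intros; ring]
        refine (abs_sub _ _).trans_eq ?_
        rw [abs_of_nonneg (hsingle0 x),
          abs_of_nonneg (mul_nonneg (hP₀0 x) (hw0 x))]
    have := sum_le_sum fun x (_ : x ∈ univ) => hdist x
    rw [sum_add_distrib, hsingle] at this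
    linarith

lemma sum_moveMass_mul_eq_tvDual [DecidableEq X] [Nonempty X] {P₀ w l : X → ℝ} {ξ t : ℝ}
    {x₀ : X} (hP₀1 : ∑ x, P₀ x = 1) (hx₀ : ∀ x, l x₀ ≤ l x) (ht : l x₀ ≤ t)
    (hw : ∀ x, w x * (l x - t) = max (l x - t) 0)
    (hq : ∑ x, P₀ x * w x = ξ ∨ t = l x₀) :
    ∑ x, moveMass P₀ w x₀ x * l x = tvDual P₀ l ξ t := by
  have hsup : univ.sup' univ_nonempty (fun x => max (t - l x) 0) = t - l x₀ :=
    le_antisymm (sup'_le _ _ fun x _ => max_le (by linarith [hx₀ x]) (by linarith))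
      (le_sup'_of_le _ (mem_univ x₀) (le_max_left _ _))
  have hprimal : ∑ x, moveMass P₀ w x₀ x * l x
      = ∑ x, P₀ x * l x - ∑ x, P₀ x * w x * l x + (∑ x, P₀ x * w x) * l x₀ := by
    simp only [moveMass, add_mul, sum_add_distrib, Pi.single_apply, ite_mul, zero_mul,
      sum_ite_eq', mem_univ, if_true, mul_sub, mul_one, sub_mul, sum_sub_distrib]
  have hhinge : ∑ x, P₀ x * max (t - l x) 0
      = t - ∑ x, P₀ x * l x + ∑ x, P₀ x * w x * l x - t * ∑ x, P₀ x * w x := by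
    calc ∑ x, P₀ x * max (t - l x) 0
        = ∑ x, (P₀ x * t - P₀ x * l x + P₀ x * w x * l x - t * (P₀ x * w x)) :=
          sum_congr rfl fun x _ => by
            rw [max_sub_zero_eq_add_max_sub_zero, ← hw]
            ring
      _ = _ := by
          simp only [sum_sub_distrib, sum_add_distrib, ← mul_sum, ← sum_mul, hP₀1, one_mul]
  -- the duality gap is now `(ξ - ∑ x, P₀ x * w x) * (t - l x₀)`
  rw [hprimal, tvDual, hsup, hhinge]
  rcases hq with hq | hq
  · rw [hq]; ring
  · rw [hq]; ring

lemma exists_quantile {P₀ l : X → ℝ} {ξ : ℝ} (hξ : 0 ≤ ξ) (hξ1 : ξ < ∑ x, P₀ x) :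
    ∃ x₁, ∑ x with l x₁ < l x, P₀ x ≤ ξ ∧ ξ < ∑ x with l x₁ ≤ l x, P₀ x := by
  obtain ⟨x₀, -, hx₀⟩ :=
    exists_min_image univ l (nonempty_of_sum_ne_zero (by linarith : ∑ x, P₀ x ≠ 0))
  have hne : (univ.filter fun y => ξ < ∑ x with l y ≤ l x, P₀ x).Nonempty :=
    ⟨x₀, by simpa [hx₀] using hξ1⟩
  obtain ⟨x₁, hx₁, hx₁max⟩ := exists_max_image _ l hne
  refine ⟨x₁, ?_, (mem_filter.1 hx₁).2⟩
  by_contra! hgt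
  obtain ⟨y, hy, hymin⟩ := exists_min_image _ l
    (nonempty_of_sum_ne_zero (by linarith : ∑ x with l x₁ < l x, P₀ x ≠ 0))
  have hy : l x₁ < l y := (mem_filter.1 hy).2
  have hlevels : (univ.filter fun x => l y ≤ l x) = univ.filter fun x => l x₁ < l x := by
    ext x
    simp only [mem_filter, mem_univ, true_and]
    exact ⟨fun h => hy.trans_le h, fun h => hymin x (by simp [h])⟩
  have := hx₁max y (by simp [hlevels, hgt])
  linarith

end

section

variable {X : Type*}

noncomputable def levelWeight (l : X → ℝ) (t θ : ℝ) (x : X) : ℝ :=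
  (1 - θ) * (if t < l x then 1 else 0) + θ * (if t ≤ l x then 1 else 0)

lemma levelWeight_nonneg {l : X → ℝ} {t θ : ℝ} (hθ0 : 0 ≤ θ) (x : X) :
    0 ≤ levelWeight l t θ x := by
  unfold levelWeight; split_ifs <;> linarith

lemma levelWeight_le_one {l : X → ℝ} {t θ : ℝ} (hθ1 : θ ≤ 1) (x : X) :
    levelWeight l t θ x ≤ 1 := by
  unfold levelWeight; split_ifs <;> linarith

lemma levelWeight_mul_sub (l : X → ℝ) (t θ : ℝ) (x : X) :
    levelWeight l t θ x * (l x - t) = max (l x - t) 0 := by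
  unfold levelWeight
  rcases lt_trichotomy (l x) t with h | h | h
  · simp [h.not_gt, h.not_ge, h.le]
  · simp [h]
  · simp [h, h.le]

variable [Fintype X]

lemma sum_mul_levelWeight (P₀ l : X → ℝ) (t θ : ℝ) :
    ∑ x, P₀ x * levelWeight l t θ x
      = (1 - θ) * ∑ x with t < l x, P₀ x + θ * ∑ x with t ≤ l x, P₀ x := by
  simp only [levelWeight, sum_filter, mul_add, sum_add_distrib, mul_sum]
  congr 1 <;> refine sum_congr rfl fun x _ => by split_ifs <;> ring

lemma exists_threshold {P₀ l : X → ℝ} {ξ : ℝ} {x₀ : X} (hP₀1 : ∑ x, P₀ x = 1) (hξ : 0 ≤ ξ)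
    (hx₀ : ∀ x, l x₀ ≤ l x) :
    ∃ t θ, l x₀ ≤ t ∧ 0 ≤ θ ∧ θ ≤ 1 ∧ ∑ x, P₀ x * levelWeight l t θ x ≤ ξ ∧
      (∑ x, P₀ x * levelWeight l t θ x = ξ ∨ t = l x₀) := by
  rcases lt_or_ge ξ 1 with hξ1 | hξ1
  · obtain ⟨x₁, hF, hG⟩ := exists_quantile (P₀ := P₀) (l := l) hξ (hP₀1 ▸ hξ1)
    set F := ∑ x with l x₁ < l x, P₀ x
    set G := ∑ x with l x₁ ≤ l x, P₀ x
    have hq : ∑ x, P₀ x * levelWeight l (l x₁) ((ξ - F) / (G - F)) x = ξ := by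
      rw [sum_mul_levelWeight]
      field_simp [(by linarith : G - F ≠ 0)]
      ring
    exact ⟨l x₁, (ξ - F) / (G - F), hx₀ x₁, div_nonneg (by linarith) (by linarith),
      (div_le_one (by linarith)).2 (by linarith), hq.le, .inl hq⟩
  · refine ⟨l x₀, 1, le_rfl, zero_le_one, le_rfl, ?_, .inr rfl⟩
    simpa [sum_mul_levelWeight, hx₀, hP₀1] using hξ1

end

theorem stmt0 {X : Type*} [Fintype X] [Nonempty X]
    (P₀ : X → ℝ) (hP₀0 : ∀ x, 0 ≤ P₀ x) (hP₀1 : ∑ x, P₀ x = 1)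
    (l : X → ℝ) (ξ : ℝ) (hξ : 0 ≤ ξ) :
    ∃ v : ℝ,
      IsLeast {w : ℝ | ∃ P : X → ℝ, (∀ x, 0 ≤ P x) ∧ (∑ x, P x = 1) ∧
          (∑ x, |P x - P₀ x|) / 2 ≤ ξ ∧ w = ∑ x, P x * l x} v ∧
      IsGreatest {w : ℝ | ∃ lam : ℝ,
          w = lam - (∑ x, P₀ x * max (lam - l x) 0)
            - ξ * Finset.univ.sup' Finset.univ_nonempty (fun x => max (lam - l x) 0)} v := by
  classical
  obtain ⟨x₀, hx₀⟩ := Finite.exists_min l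
  obtain ⟨t, θ, ht, hθ0, hθ1, hq, hopt⟩ := exists_threshold hP₀1 hξ hx₀
  have hP : InTVBall P₀ ξ (moveMass P₀ (levelWeight l t θ) x₀) :=
    moveMass_inTVBall x₀ hP₀0 hP₀1 (levelWeight_nonneg hθ0) (levelWeight_le_one hθ1) hq
  exact ⟨_, isLeast_isGreatest_of_tvDual_eq hP₀1 hP
    (sum_moveMass_mul_eq_tvDual hP₀1 hx₀ ht (levelWeight_mul_sub l t θ) hopt)⟩
end

section
/- Let 𝒳 be a finite nonempty set, P₀ ∈ Δ(𝒳), ℓ : 𝒳 → ℝ, and ξ ≥ 0. Then the infimum of E_P[ℓ] over all P ∈ Δ(𝒳) with KL(P‖P₀) ≤ ξ equals the supremum over λ > 0 of −λ·log E_{P₀}[exp(−ℓ/λ)] − λξ. -/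
/-
Weak duality is the Donsker–Varadhan inequality `E_P[f] - KL(P‖P₀) ≤ log E_{P₀}[exp f]` with
`f = -ℓ/λ`. It is an equality at the Gibbs tilt `P_β ∝ P₀ exp(-βℓ)`, which gives
`E_{P_β}[ℓ] = φ(1/β) + (ξ - KL(P_β‖P₀))/β` for the dual objective `φ`. The map
`β ↦ KL(P_β‖P₀)` is continuous and vanishes at `β = 0`. For `ξ > 0`, either `P_β` is feasible
for some large `β`, with error at most `ξ/β`, or the intermediate value theorem yields `β` with
`KL(P_β‖P₀) = ξ` and no error. For `ξ = 0`, `P₀` is feasible and `E_{P_β}[ℓ] → E_{P₀}[ℓ]` as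
`β → 0`.
-/

open scoped BigOperators

/-- The KL divergence between two (finitely supported, real-valued) distributions,
valued in `EReal`: it is `⊤` unless `P` is absolutely continuous w.r.t. `Q`. -/
noncomputable def KLdiv {X : Type*} [Fintype X] (P Q : X → ℝ) : EReal :=
  if ∀ x, Q x = 0 → P x = 0 then
    (((∑ x, if 0 < P x then P x * Real.log (P x / Q x) else 0) : ℝ) : EReal)
  else ⊤

open Real Finset Filter Topology

lemma mul_log_div_le_sub {p r : ℝ} (hp : 0 ≤ p) (hr : 0 ≤ r) (hrp : r = 0 → p = 0) :
    p * log (r / p) ≤ r - p := by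
  rcases hp.lt_or_eq with hp | rfl
  · have hr : 0 < r := hr.lt_of_ne fun h => hp.ne' (hrp h.symm)
    have := log_le_sub_one_of_pos (div_pos hr hp)
    calc p * log (r / p) ≤ p * (r / p - 1) := by gcongr
      _ = r - p := by field_simp
  · simpa using hr

lemma exists_gt_mem_of_continuousAt {g : ℝ → ℝ} {a : ℝ} (hg : ContinuousAt g a) {U : Set ℝ}
    (hU : U ∈ 𝓝 (g a)) : ∃ b > a, g b ∈ U :=
  let ⟨b, hbU, hb⟩ := ((hg.eventually_mem hU).filter_mono nhdsWithin_le_nhds |>.and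
    (self_mem_nhdsWithin (s := Set.Ioi a))).exists
  ⟨b, hb, hbU⟩

noncomputable section

variable {X : Type*} [Fintype X]

-- Terms with `P x = 0` vanish; absolute continuity `P ≪ Q` is not encoded and must be assumed.
def relEntropy (P Q : X → ℝ) : ℝ := ∑ x, P x * log (P x / Q x)

def gibbsTilt (Q f : X → ℝ) (x : X) : ℝ := Q x * exp (f x) / ∑ y, Q y * exp (f y)

lemma KLdiv_le_coe_iff {P Q : X → ℝ} (hP : ∀ x, 0 ≤ P x) (ξ : ℝ) :
    KLdiv P Q ≤ (ξ : EReal) ↔ (∀ x, Q x = 0 → P x = 0) ∧ relEntropy P Q ≤ ξ := by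
  unfold KLdiv
  split_ifs with hPQ
  · have hsum : (∑ x, if 0 < P x then P x * log (P x / Q x) else 0) = relEntropy P Q := by
      refine sum_congr rfl fun x _ => ?_
      rcases (hP x).lt_or_eq with hx | hx
      · rw [if_pos hx]
      · rw [← hx, if_neg (lt_irrefl 0), zero_mul]
    rw [hsum, EReal.coe_le_coe_iff]
    exact ⟨fun h => ⟨hPQ, h⟩, And.right⟩
  · simp [hPQ]

lemma exists_pos_of_mem_stdSimplex {Q : X → ℝ} (hQ : Q ∈ stdSimplex ℝ X) : ∃ x, 0 < Q x := by
  by_contra! h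
  have : ∑ x, Q x = 0 := sum_eq_zero fun x _ => (h x).antisymm (hQ.1 x)
  simp [hQ.2] at this

lemma sum_mul_exp_pos {Q : X → ℝ} (hQ : Q ∈ stdSimplex ℝ X) (f : X → ℝ) :
    0 < ∑ x, Q x * exp (f x) := by
  obtain ⟨x, hx⟩ := exists_pos_of_mem_stdSimplex hQ
  exact sum_pos' (fun y _ => by have := hQ.1 y; positivity) ⟨x, mem_univ x, by positivity⟩

lemma gibbsTilt_mem_stdSimplex {Q : X → ℝ} (hQ : Q ∈ stdSimplex ℝ X) (f : X → ℝ) :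
    gibbsTilt Q f ∈ stdSimplex ℝ X := by
  have hZ := sum_mul_exp_pos hQ f
  refine ⟨fun x => by have := hQ.1 x; unfold gibbsTilt; positivity, ?_⟩
  unfold gibbsTilt
  rw [← sum_div, div_self hZ.ne']

lemma gibbsTilt_eq_zero {Q : X → ℝ} (f : X → ℝ) {x : X} (hx : Q x = 0) :
    gibbsTilt Q f x = 0 := by
  simp [gibbsTilt, hx]

lemma gibbsTilt_zero {Q : X → ℝ} (hQ : Q ∈ stdSimplex ℝ X) : gibbsTilt Q (fun _ => 0) = Q := by
  ext x
  simp [gibbsTilt, hQ.2]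

lemma sum_mul_sub_relEntropy_le_log {P Q : X → ℝ} (hP : P ∈ stdSimplex ℝ X)
    (hQ : Q ∈ stdSimplex ℝ X) (hPQ : ∀ x, Q x = 0 → P x = 0) (f : X → ℝ) :
    ∑ x, P x * f x - relEntropy P Q ≤ log (∑ x, Q x * exp (f x)) := by
  set Z := ∑ x, Q x * exp (f x)
  have hZ : 0 < Z := sum_mul_exp_pos hQ f
  have hterm : ∀ x, P x * f x - P x * log (P x / Q x) - P x * log Z
      = P x * log (Q x * exp (f x) / Z / P x) := by
    intro x
    rcases (hP.1 x).lt_or_eq with hx | hx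
    · have hQx : Q x ≠ 0 := fun h => hx.ne' (hPQ x h)
      have hE := (exp_pos (f x)).ne'
      rw [log_div (div_ne_zero (mul_ne_zero hQx hE) hZ.ne') hx.ne',
        log_div (mul_ne_zero hQx hE) hZ.ne', log_div hx.ne' hQx, log_mul hQx hE, log_exp]
      ring
    · simp [← hx]
  have := sum_le_sum fun x (_ : x ∈ univ) => mul_log_div_le_sub (hP.1 x)
    (r := Q x * exp (f x) / Z) (by have := hQ.1 x; positivity)
    fun h => hPQ x (by simpa [hZ.ne'] using h)
  simp only [← hterm, sum_sub_distrib, ← sum_div, ← sum_mul] at this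
  rw [hP.2, div_self hZ.ne'] at this
  rw [relEntropy]
  linarith

lemma relEntropy_nonneg {P Q : X → ℝ} (hP : P ∈ stdSimplex ℝ X) (hQ : Q ∈ stdSimplex ℝ X)
    (hPQ : ∀ x, Q x = 0 → P x = 0) : 0 ≤ relEntropy P Q := by
  simpa [hQ.2] using sum_mul_sub_relEntropy_le_log hP hQ hPQ 0

lemma relEntropy_self (P : X → ℝ) : relEntropy P P = 0 := by
  refine sum_eq_zero fun x _ => ?_
  by_cases hx : P x = 0 <;> simp [hx]

lemma relEntropy_gibbsTilt {Q : X → ℝ} (hQ : Q ∈ stdSimplex ℝ X) (f : X → ℝ) :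
    relEntropy (gibbsTilt Q f) Q = ∑ x, gibbsTilt Q f x * f x - log (∑ x, Q x * exp (f x)) := by
  have hZ := (sum_mul_exp_pos hQ f).ne'
  have hterm : ∀ x, gibbsTilt Q f x * log (gibbsTilt Q f x / Q x)
      = gibbsTilt Q f x * f x - gibbsTilt Q f x * log (∑ x, Q x * exp (f x)) := by
    intro x
    by_cases hx : Q x = 0
    · simp [gibbsTilt_eq_zero f hx]
    · have hratio : gibbsTilt Q f x / Q x = exp (f x) / ∑ x, Q x * exp (f x) := by
        rw [gibbsTilt]; field_simp
      rw [hratio, log_div (exp_pos _).ne' hZ, log_exp, mul_sub]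
  rw [relEntropy, sum_congr rfl fun x _ => hterm x, sum_sub_distrib, ← sum_mul,
    (gibbsTilt_mem_stdSimplex hQ f).2, one_mul]

def klDual (P₀ l : X → ℝ) (ξ lam : ℝ) : ℝ :=
  -lam * log (∑ x, P₀ x * exp (-l x / lam)) - lam * ξ

lemma klDual_le_sum_mul {P₀ P : X → ℝ} (hP₀ : P₀ ∈ stdSimplex ℝ X) (hP : P ∈ stdSimplex ℝ X)
    (hPP₀ : ∀ x, P₀ x = 0 → P x = 0) (l : X → ℝ) {ξ lam : ℝ} (hKL : relEntropy P P₀ ≤ ξ)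
    (hlam : 0 < lam) : klDual P₀ l ξ lam ≤ ∑ x, P x * l x := by
  have hDV := sum_mul_sub_relEntropy_le_log hP hP₀ hPP₀ fun x => -l x / lam
  have hmean : ∑ x, P x * (-l x / lam) = -(∑ x, P x * l x) / lam := by
    rw [neg_div, sum_div, ← sum_neg_distrib]
    exact sum_congr rfl fun x _ => by ring
  rw [hmean, neg_div] at hDV
  have hscaled := mul_le_mul_of_nonneg_left hDV hlam.le
  rw [mul_sub, mul_neg, mul_div_cancel₀ _ hlam.ne'] at hscaled
  have := mul_le_mul_of_nonneg_left hKL hlam.le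
  unfold klDual
  linarith

lemma sum_gibbsTilt_mul_eq_klDual_add {P₀ : X → ℝ} (hP₀ : P₀ ∈ stdSimplex ℝ X) (l : X → ℝ)
    (ξ : ℝ) {β : ℝ} (hβ : 0 < β) :
    ∑ x, gibbsTilt P₀ (fun y => -l y * β) x * l x
      = klDual P₀ l ξ β⁻¹ + β⁻¹ * (ξ - relEntropy (gibbsTilt P₀ (fun y => -l y * β)) P₀) := by
  set T := gibbsTilt P₀ (fun y => -l y * β)
  have hZ : ∑ x, P₀ x * exp (-l x / β⁻¹) = ∑ x, P₀ x * exp (-l x * β) := by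
    simp only [div_inv_eq_mul]
  have hmean : ∑ x, T x * (-l x * β) = -β * ∑ x, T x * l x := by
    rw [mul_sum]
    exact sum_congr rfl fun x _ => by ring
  rw [relEntropy_gibbsTilt hP₀, klDual, hZ, hmean]
  field_simp
  ring

lemma continuous_gibbsTilt_apply {Q : X → ℝ} (hQ : Q ∈ stdSimplex ℝ X) (l : X → ℝ) (x : X) :
    Continuous fun β => gibbsTilt Q (fun y => -l y * β) x :=
  (by fun_prop : Continuous _).div (by fun_prop) fun β => (sum_mul_exp_pos hQ _).ne'

lemma continuous_relEntropy_gibbsTilt {Q : X → ℝ} (hQ : Q ∈ stdSimplex ℝ X) (l : X → ℝ) :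
    Continuous fun β => relEntropy (gibbsTilt Q (fun y => -l y * β)) Q := by
  simp only [relEntropy_gibbsTilt hQ]
  have := continuous_gibbsTilt_apply hQ l
  exact (continuous_finsetSum _ fun x _ => by fun_prop).sub
    ((by fun_prop : Continuous _).log fun β => (sum_mul_exp_pos hQ _).ne')

lemma relEntropy_gibbsTilt_nonneg {Q : X → ℝ} (hQ : Q ∈ stdSimplex ℝ X) (f : X → ℝ) :
    0 ≤ relEntropy (gibbsTilt Q f) Q :=
  relEntropy_nonneg (gibbsTilt_mem_stdSimplex hQ f) hQ fun _ => gibbsTilt_eq_zero f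

lemma KLdiv_self_le (P : X → ℝ) (hP : ∀ x, 0 ≤ P x) {ξ : ℝ} (hξ : 0 ≤ ξ) : KLdiv P P ≤ ξ :=
  (KLdiv_le_coe_iff hP ξ).2 ⟨fun _ h => h, (relEntropy_self P).trans_le hξ⟩

lemma exists_klDual_zero_ge {P₀ : X → ℝ} (hP₀ : P₀ ∈ stdSimplex ℝ X) (l : X → ℝ) {ε : ℝ}
    (hε : 0 < ε) : ∃ lam > 0, ∑ x, P₀ x * l x ≤ klDual P₀ l 0 lam + ε := by
  set T := fun β : ℝ => gibbsTilt P₀ (fun y => -l y * β)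
  have hT0 : T 0 = P₀ := by simpa [T] using gibbsTilt_zero hP₀
  have hmean : Continuous fun β => ∑ x, T β x * l x :=
    continuous_finsetSum _ fun x _ => (continuous_gibbsTilt_apply hP₀ l x).mul continuous_const
  obtain ⟨β, hβ, hβε⟩ := exists_gt_mem_of_continuousAt hmean.continuousAt
    (Ioi_mem_nhds (show ∑ x, P₀ x * l x - ε < ∑ x, T 0 x * l x by simpa [hT0] using hε))
  refine ⟨β⁻¹, inv_pos.2 hβ, ?_⟩
  have hid := sum_gibbsTilt_mul_eq_klDual_add hP₀ l 0 hβ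
  have := mul_nonneg (inv_pos.2 hβ).le (relEntropy_gibbsTilt_nonneg hP₀ fun y => -l y * β)
  simp only [T, Set.mem_Ioi] at hβε
  linarith

lemma exists_gibbsTilt_le_klDual_add {P₀ : X → ℝ} (hP₀ : P₀ ∈ stdSimplex ℝ X) (l : X → ℝ)
    {ξ ε : ℝ} (hξ : 0 < ξ) (hε : 0 < ε) :
    ∃ β > 0, relEntropy (gibbsTilt P₀ (fun y => -l y * β)) P₀ ≤ ξ ∧
      ∑ x, gibbsTilt P₀ (fun y => -l y * β) x * l x ≤ klDual P₀ l ξ β⁻¹ + ε := by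
  -- In the inverse temperature `β = 1/λ` the family is continuous at `β = 0`, where `P_β = P₀`.
  set kl := fun β : ℝ => relEntropy (gibbsTilt P₀ (fun y => -l y * β)) P₀
  have hkl : Continuous kl := continuous_relEntropy_gibbsTilt hP₀ l
  have hkl_nonneg : ∀ β, 0 ≤ kl β := fun β => relEntropy_gibbsTilt_nonneg hP₀ _
  have hkl0 : kl 0 = 0 := by simpa [kl, gibbsTilt_zero hP₀] using relEntropy_self P₀
  obtain ⟨β₀, hβ₀, hβ₀ξ : kl β₀ < ξ⟩ :=
    exists_gt_mem_of_continuousAt hkl.continuousAt (Iio_mem_nhds (hkl0 ▸ hξ))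
  set β₁ := max β₀ (ξ / ε)
  obtain ⟨β, hβ₀β, hβξ, hgap⟩ : ∃ β, β₀ ≤ β ∧ kl β ≤ ξ ∧ ξ - kl β ≤ ε * β := by
    by_cases hβ₁ : kl β₁ ≤ ξ
    · refine ⟨β₁, le_max_left _ _, hβ₁, ?_⟩
      have : ξ ≤ ε * β₁ := by
        rw [← div_le_iff₀' hε]; exact le_max_right _ _
      linarith [hkl_nonneg β₁]
    · obtain ⟨β, hβ, hβξ⟩ := intermediate_value_Icc (le_max_left β₀ (ξ / ε)) hkl.continuousOn
        ⟨hβ₀ξ.le, (not_le.1 hβ₁).le⟩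
      exact ⟨β, hβ.1, hβξ.le, by rw [hβξ, sub_self]; exact mul_nonneg hε.le (hβ₀.le.trans hβ.1)⟩
  have hβ : 0 < β := hβ₀.trans_le hβ₀β
  refine ⟨β, hβ, hβξ, ?_⟩
  rw [sum_gibbsTilt_mul_eq_klDual_add hP₀ l ξ hβ]
  have : β⁻¹ * (ξ - kl β) ≤ ε := by rw [inv_mul_le_iff₀ hβ]; linarith
  linarith

lemma exists_feasible_le_klDual_add {P₀ : X → ℝ} (hP₀ : P₀ ∈ stdSimplex ℝ X) (l : X → ℝ)
    {ξ ε : ℝ} (hξ : 0 ≤ ξ) (hε : 0 < ε) :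
    ∃ P ∈ stdSimplex ℝ X, KLdiv P P₀ ≤ ξ ∧ ∃ lam > 0, ∑ x, P x * l x ≤ klDual P₀ l ξ lam + ε := by
  rcases hξ.eq_or_lt with rfl | hξ
  · exact ⟨P₀, hP₀, KLdiv_self_le P₀ hP₀.1 le_rfl, exists_klDual_zero_ge hP₀ l hε⟩
  · obtain ⟨β, hβ, hKL, hle⟩ := exists_gibbsTilt_le_klDual_add hP₀ l hξ hε
    have hT := gibbsTilt_mem_stdSimplex hP₀ fun y => -l y * β
    exact ⟨_, hT, (KLdiv_le_coe_iff hT.1 ξ).2 ⟨fun x => gibbsTilt_eq_zero _, hKL⟩,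
      β⁻¹, inv_pos.2 hβ, hle⟩

end

theorem stmt1_general {X : Type*} [Fintype X]
    (P₀ : X → ℝ) (hP₀0 : ∀ x, 0 ≤ P₀ x) (hP₀1 : ∑ x, P₀ x = 1)
    (l : X → ℝ) (ξ : ℝ) (hξ : 0 ≤ ξ) :
    sInf {w : ℝ | ∃ P : X → ℝ, (∀ x, 0 ≤ P x) ∧ (∑ x, P x = 1) ∧
        KLdiv P P₀ ≤ (ξ : EReal) ∧ w = ∑ x, P x * l x}
      = sSup {w : ℝ | ∃ lam : ℝ, 0 < lam ∧
        w = -lam * Real.log (∑ x, P₀ x * Real.exp (-l x / lam)) - lam * ξ} := by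
  set A := {w : ℝ | ∃ P : X → ℝ, (∀ x, 0 ≤ P x) ∧ (∑ x, P x = 1) ∧
    KLdiv P P₀ ≤ (ξ : EReal) ∧ w = ∑ x, P x * l x}
  set B := {w : ℝ | ∃ lam : ℝ, 0 < lam ∧
    w = -lam * Real.log (∑ x, P₀ x * Real.exp (-l x / lam)) - lam * ξ}
  have hP₀ : P₀ ∈ stdSimplex ℝ X := ⟨hP₀0, hP₀1⟩
  have weak : ∀ a ∈ A, ∀ b ∈ B, b ≤ a := by
    rintro _ ⟨P, hP0, hP1, hKL, rfl⟩ _ ⟨lam, hlam, rfl⟩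
    obtain ⟨hPP₀, hKL⟩ := (KLdiv_le_coe_iff hP0 ξ).1 hKL
    exact klDual_le_sum_mul hP₀ ⟨hP0, hP1⟩ hPP₀ l hKL hlam
  have hA : ∑ x, P₀ x * l x ∈ A := ⟨P₀, hP₀0, hP₀1, KLdiv_self_le P₀ hP₀0 hξ, rfl⟩
  have hB : klDual P₀ l ξ 1 ∈ B := ⟨1, one_pos, rfl⟩
  refine le_antisymm (le_of_forall_pos_le_add fun ε hε => ?_)
    (csSup_le ⟨_, hB⟩ fun b hb => le_csInf ⟨_, hA⟩ fun a ha => weak a ha b hb)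
  obtain ⟨P, hP, hKL, lam, hlam, hle⟩ := exists_feasible_le_klDual_add hP₀ l hξ hε
  calc sInf A ≤ ∑ x, P x * l x :=
        csInf_le ⟨_, fun a ha => weak a ha _ hB⟩ ⟨P, hP.1, hP.2, hKL, rfl⟩
    _ ≤ klDual P₀ l ξ lam + ε := hle
    _ ≤ sSup B + ε := by
      gcongr
      exact le_csSup ⟨_, fun b hb => weak _ hA b hb⟩ ⟨lam, hlam, rfl⟩

theorem stmt1 {X : Type*} [Fintype X] [Nonempty X]
    (P₀ : X → ℝ) (hP₀0 : ∀ x, 0 ≤ P₀ x) (hP₀1 : ∑ x, P₀ x = 1)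
    (l : X → ℝ) (ξ : ℝ) (hξ : 0 ≤ ξ) :
    sInf {w : ℝ | ∃ P : X → ℝ, (∀ x, 0 ≤ P x) ∧ (∑ x, P x = 1) ∧
        KLdiv P P₀ ≤ (ξ : EReal) ∧ w = ∑ x, P x * l x}
      = sSup {w : ℝ | ∃ lam : ℝ, 0 < lam ∧
        w = -lam * Real.log (∑ x, P₀ x * Real.exp (-l x / lam)) - lam * ξ} :=
  stmt1_general P₀ hP₀0 hP₀1 l ξ hξ
end

section
/- Let X and Y be finite nonempty sets and let P, Q ∈ Δ(X × Y) be joint distributions whose X-marginals P_X, Q_X are strictly positive everywhere on X. Then ∑_{x∈X} P_X(x) · ∑_{y∈Y} |P_{Y|X}(y|x) − Q_{Y|X}(y|x)| ≤ 2 · ∑_{x∈X, y∈Y} |P(x,y) − Q(x,y)|. -/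
open Finset

/- Rescaling by `a / b`, where `a = ∑ p` and `b = ∑ q`, moves `q` by exactly `|b - a|` in ℓ¹,
and `|b - a| ≤ ‖p - q‖₁`. -/
theorem sum_abs_sub_sum_div_sum_mul_le {Y : Type*} [Fintype Y] (p q : Y → ℝ)
    (hq0 : ∀ y, 0 ≤ q y) (hq : 0 < ∑ y, q y) :
    ∑ y, |p y - (∑ y', p y') / (∑ y', q y') * q y| ≤ 2 * ∑ y, |p y - q y| := by
  set a := ∑ y, p y
  set b := ∑ y, q y with hb
  have hrescale : ∑ y, |q y - a / b * q y| = |b - a| := by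
    have hterm : ∀ y, |q y - a / b * q y| = q y / b * |b - a| := fun y => by
      rw [show q y - a / b * q y = q y / b * (b - a) by field_simp, abs_mul,
        abs_of_nonneg (div_nonneg (hq0 y) hq.le)]
    rw [sum_congr rfl fun y _ => hterm y, ← sum_mul, ← sum_div, ← hb, div_self hq.ne', one_mul]
  have hmass : |b - a| ≤ ∑ y, |p y - q y| := by
    rw [abs_sub_comm, ← sum_sub_distrib]
    exact abs_sum_le_sum_abs _ _
  calc ∑ y, |p y - a / b * q y|
      ≤ ∑ y, (|p y - q y| + |q y - a / b * q y|) :=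
        sum_le_sum fun y _ => abs_sub_le _ _ _
    _ = ∑ y, |p y - q y| + |b - a| := by rw [sum_add_distrib, hrescale]
    _ ≤ 2 * ∑ y, |p y - q y| := by linarith

theorem sum_mul_sum_abs_div_sum_sub_div_sum_le {Y : Type*} [Fintype Y] (p q : Y → ℝ)
    (hp : 0 < ∑ y, p y) (hq0 : ∀ y, 0 ≤ q y) (hq : 0 < ∑ y, q y) :
    (∑ y, p y) * ∑ y, |p y / (∑ y', p y') - q y / (∑ y', q y')|
      ≤ 2 * ∑ y, |p y - q y| := by
  have hterm : ∀ y, (∑ y', p y') * |p y / (∑ y', p y') - q y / (∑ y', q y')|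
      = |p y - (∑ y', p y') / (∑ y', q y') * q y| := fun y => by
    rw [← abs_of_pos hp, ← abs_mul, abs_of_pos hp]
    congr 1
    field_simp
  rw [mul_sum, sum_congr rfl fun y _ => hterm y]
  exact sum_abs_sub_sum_div_sum_mul_le p q hq0 hq

theorem stmt9_general {X Y : Type*} [Fintype X] [Fintype Y]
    (P Q : X × Y → ℝ)
    (hQ0 : ∀ p, 0 ≤ Q p)
    (hPX : ∀ x, 0 < ∑ y, P (x, y)) (hQX : ∀ x, 0 < ∑ y, Q (x, y)) :
    ∑ x, (∑ y, P (x, y)) *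
        ∑ y, |P (x, y) / (∑ y', P (x, y')) - Q (x, y) / (∑ y', Q (x, y'))|
      ≤ 2 * ∑ p : X × Y, |P p - Q p| := by
  calc _ ≤ ∑ x, 2 * ∑ y, |P (x, y) - Q (x, y)| := sum_le_sum fun x _ =>
        sum_mul_sum_abs_div_sum_sub_div_sum_le _ _ (hPX x) (fun y => hQ0 (x, y)) (hQX x)
    _ = 2 * ∑ p : X × Y, |P p - Q p| := by rw [← mul_sum, Fintype.sum_prod_type]

theorem stmt9 {X Y : Type*} [Fintype X] [Fintype Y] [Nonempty X] [Nonempty Y]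
    (P Q : X × Y → ℝ)
    (hP0 : ∀ p, 0 ≤ P p) (hP1 : ∑ p, P p = 1)
    (hQ0 : ∀ p, 0 ≤ Q p) (hQ1 : ∑ p, Q p = 1)
    (hPX : ∀ x, 0 < ∑ y, P (x, y)) (hQX : ∀ x, 0 < ∑ y, Q (x, y)) :
    ∑ x, (∑ y, P (x, y)) *
        ∑ y, |P (x, y) / (∑ y', P (x, y')) - Q (x, y) / (∑ y', Q (x, y'))|
      ≤ 2 * ∑ p : X × Y, |P p - Q p| :=
  stmt9_general P Q hQ0 hPX hQX
end

section
/- Let X and Y be finite nonempty sets, P, Q ∈ Δ(X), and let P_{Y|X}, Q_{Y|X} : X → Δ(Y) be conditional kernels. Define the joint distributions P_{XY}(x,y) := P(x)·P_{Y|X}(y|x) and Q_{XY}(x,y) := Q(x)·Q_{Y|X}(y|x). Then ∑_{x∈X} P(x) · D_H²(P_{Y|X}(·|x), Q_{Y|X}(·|x)) ≤ 8 · D_H²(P_{XY}, Q_{XY}). -/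
/-!
Fix `x` and write `c = P x`, `d = Q x`, `u = P_{Y|X}(·|x)`, `v = Q_{Y|X}(·|x)`. Pointwise
`√c (√u - √v) = (√(c u) - √(d v)) + (√d - √c) √v`, so `(a + b)² ≤ 2a² + 2b²` bounds
`c · ∑ (√u - √v)²` by twice the joint term at `x` plus `2 (√c - √d)²`. The last term is at most the
joint term at `x` as well: by Cauchy–Schwarz the Hellinger sum of two nonnegative vectors dominates
that of their total masses `c = ∑ c u` and `d = ∑ d v`.
-/

open Finset Real

section Hellinger

variable {ι : Type*} (s : Finset ι) {f g : ι → ℝ}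

lemma sq_sqrt_sub_sqrt {a b : ℝ} (ha : 0 ≤ a) (hb : 0 ≤ b) :
    (√a - √b) ^ 2 = a + b - 2 * (√a * √b) := by
  rw [sub_sq, sq_sqrt ha, sq_sqrt hb]
  ring

lemma sum_sq_sqrt_sub_sqrt (hf : ∀ i, 0 ≤ f i) (hg : ∀ i, 0 ≤ g i) :
    ∑ i ∈ s, (√(f i) - √(g i)) ^ 2
      = ∑ i ∈ s, f i + ∑ i ∈ s, g i - 2 * ∑ i ∈ s, √(f i) * √(g i) := by
  simp only [sq_sqrt_sub_sqrt (hf _) (hg _), sum_sub_distrib, sum_add_distrib, mul_sum]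

lemma sq_sqrt_sum_sub_sqrt_sum_le (hf : ∀ i, 0 ≤ f i) (hg : ∀ i, 0 ≤ g i) :
    (√(∑ i ∈ s, f i) - √(∑ i ∈ s, g i)) ^ 2 ≤ ∑ i ∈ s, (√(f i) - √(g i)) ^ 2 := by
  rw [sum_sq_sqrt_sub_sqrt s hf hg,
    sq_sqrt_sub_sqrt (sum_nonneg fun i _ => hf i) (sum_nonneg fun i _ => hg i)]
  linarith [sum_sqrt_mul_sqrt_le s hf hg]

end Hellinger

lemma mul_sq_sqrt_sub_sqrt_le {c d v : ℝ} (u : ℝ) (hc : 0 ≤ c) (hd : 0 ≤ d) (hv : 0 ≤ v) :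
    c * (√u - √v) ^ 2 ≤ 2 * (√(c * u) - √(d * v)) ^ 2 + 2 * ((√c - √d) ^ 2 * v) := by
  have hsplit : √c * (√u - √v) = (√(c * u) - √(d * v)) + (√d - √c) * √v := by
    rw [sqrt_mul hc, sqrt_mul hd]
    ring
  calc c * (√u - √v) ^ 2 = (√c * (√u - √v)) ^ 2 := by rw [mul_pow, sq_sqrt hc]
    _ ≤ 2 * ((√(c * u) - √(d * v)) ^ 2 + ((√d - √c) * √v) ^ 2) := hsplit ▸ add_sq_le
    _ = 2 * (√(c * u) - √(d * v)) ^ 2 + 2 * ((√c - √d) ^ 2 * v) := by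
      rw [mul_pow, sq_sqrt hv]
      ring

lemma mul_sum_sq_sqrt_sub_sqrt_le {Y : Type*} [Fintype Y] {c d : ℝ} (hc : 0 ≤ c) (hd : 0 ≤ d)
    {u v : Y → ℝ} (hu0 : ∀ y, 0 ≤ u y) (hu1 : ∑ y, u y = 1) (hv0 : ∀ y, 0 ≤ v y)
    (hv1 : ∑ y, v y = 1) :
    c * ∑ y, (√(u y) - √(v y)) ^ 2 ≤ 4 * ∑ y, (√(c * u y) - √(d * v y)) ^ 2 := by
  have hmarginal : (√c - √d) ^ 2 ≤ ∑ y, (√(c * u y) - √(d * v y)) ^ 2 := by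
    simpa only [← mul_sum, hu1, hv1, mul_one] using
      sq_sqrt_sum_sub_sqrt_sum_le univ (fun y => mul_nonneg hc (hu0 y))
        (fun y => mul_nonneg hd (hv0 y))
  calc c * ∑ y, (√(u y) - √(v y)) ^ 2
      ≤ ∑ y, (2 * (√(c * u y) - √(d * v y)) ^ 2 + 2 * ((√c - √d) ^ 2 * v y)) := by
        rw [mul_sum]
        exact sum_le_sum fun y _ => mul_sq_sqrt_sub_sqrt_le (u y) hc hd (hv0 y)
    _ = 2 * ∑ y, (√(c * u y) - √(d * v y)) ^ 2 + 2 * (√c - √d) ^ 2 := by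
        rw [sum_add_distrib, ← mul_sum, ← mul_sum, ← mul_sum, hv1, mul_one]
    _ ≤ 4 * ∑ y, (√(c * u y) - √(d * v y)) ^ 2 := by linarith

theorem stmt12_general {X Y : Type*} [Fintype X] [Fintype Y]
    (P Q : X → ℝ) (hP0 : ∀ x, 0 ≤ P x)
    (hQ0 : ∀ x, 0 ≤ Q x)
    (PY QY : X → Y → ℝ)
    (hPY0 : ∀ x y, 0 ≤ PY x y) (hPY1 : ∀ x, ∑ y, PY x y = 1)
    (hQY0 : ∀ x y, 0 ≤ QY x y) (hQY1 : ∀ x, ∑ y, QY x y = 1) :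
    ∑ x, P x * (1 / 2 * ∑ y, (Real.sqrt (PY x y) - Real.sqrt (QY x y)) ^ 2)
      ≤ 8 * (1 / 2 * ∑ p : X × Y,
          (Real.sqrt (P p.1 * PY p.1 p.2) - Real.sqrt (Q p.1 * QY p.1 p.2)) ^ 2) := by
  have hjoint : 0 ≤ ∑ p : X × Y, (√(P p.1 * PY p.1 p.2) - √(Q p.1 * QY p.1 p.2)) ^ 2 :=
    sum_nonneg fun _ _ => sq_nonneg _
  have hcond : ∑ x, P x * ∑ y, (√(PY x y) - √(QY x y)) ^ 2
      ≤ 4 * ∑ p : X × Y, (√(P p.1 * PY p.1 p.2) - √(Q p.1 * QY p.1 p.2)) ^ 2 := by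
    rw [Fintype.sum_prod_type, mul_sum]
    exact sum_le_sum fun x _ =>
      mul_sum_sq_sqrt_sub_sqrt_le (hP0 x) (hQ0 x) (hPY0 x) (hPY1 x) (hQY0 x) (hQY1 x)
  simp only [mul_left_comm (P _), ← mul_sum]
  linarith

theorem stmt12 {X Y : Type*} [Fintype X] [Fintype Y] [Nonempty X] [Nonempty Y]
    (P Q : X → ℝ) (hP0 : ∀ x, 0 ≤ P x) (hP1 : ∑ x, P x = 1)
    (hQ0 : ∀ x, 0 ≤ Q x) (hQ1 : ∑ x, Q x = 1)
    (PY QY : X → Y → ℝ)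
    (hPY0 : ∀ x y, 0 ≤ PY x y) (hPY1 : ∀ x, ∑ y, PY x y = 1)
    (hQY0 : ∀ x y, 0 ≤ QY x y) (hQY1 : ∀ x, ∑ y, QY x y = 1) :
    ∑ x, P x * (1 / 2 * ∑ y, (Real.sqrt (PY x y) - Real.sqrt (QY x y)) ^ 2)
      ≤ 8 * (1 / 2 * ∑ p : X × Y,
          (Real.sqrt (P p.1 * PY p.1 p.2) - Real.sqrt (Q p.1 * QY p.1 p.2)) ^ 2) :=
  stmt12_general P Q hP0 hQ0 PY QY hPY0 hPY1 hQY0 hQY1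
end

section
/- Let 𝒪 be a finite nonempty set, P, Q ∈ Δ(𝒪), f : 𝒪 → [0,1], and λ > 0. Then λ·( log E_Q[exp(−f/λ)] − log E_P[exp(−f/λ)] ) ≤ λ · e^{1/λ} · ‖P − Q‖₁. -/
/-!
Write `E = exp (-f / λ)`, so that `exp (-1/λ) ≤ E ≤ 1`. Both expectations `A = E_P[E]` and
`B = E_Q[E]` are then at least `exp (-1/λ)`, and `B - A ≤ ‖P - Q‖₁` because `|E| ≤ 1`.
Concavity of the logarithm gives `log B - log A ≤ (B - A) / A ≤ exp (1/λ) ‖P - Q‖₁`.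
-/

open scoped BigOperators

theorem Real.log_sub_log_le_div_of_sub_le {a b d : ℝ} (ha : 0 < a) (hb : 0 < b)
    (h : b - a ≤ d) : Real.log b - Real.log a ≤ d / a := by
  calc Real.log b - Real.log a = Real.log (b / a) := (Real.log_div hb.ne' ha.ne').symm
    _ ≤ b / a - 1 := Real.log_le_sub_one_of_pos (div_pos hb ha)
    _ = (b - a) / a := by field_simp
    _ ≤ d / a := div_le_div_of_nonneg_right h ha.le

section FiniteDistribution

variable {ι : Type*} [Fintype ι]

theorem le_sum_mul_of_le {p g : ι → ℝ} (hp0 : ∀ i, 0 ≤ p i) (hp1 : ∑ i, p i = 1) {c : ℝ}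
    (hc : ∀ i, c ≤ g i) : c ≤ ∑ i, p i * g i := by
  calc c = ∑ i, p i * c := by rw [← Finset.sum_mul, hp1, one_mul]
    _ ≤ ∑ i, p i * g i :=
      Finset.sum_le_sum fun i _ => mul_le_mul_of_nonneg_left (hc i) (hp0 i)

theorem sum_mul_sub_sum_mul_le_sum_abs_sub (p q g : ι → ℝ) (hg : ∀ i, |g i| ≤ 1) :
    ∑ i, q i * g i - ∑ i, p i * g i ≤ ∑ i, |p i - q i| := by
  rw [← Finset.sum_sub_distrib]
  refine Finset.sum_le_sum fun i _ => ?_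
  calc q i * g i - p i * g i ≤ |(q i - p i) * g i| := by
        rw [sub_mul]; exact le_abs_self _
    _ = |p i - q i| * |g i| := by rw [abs_mul, abs_sub_comm]
    _ ≤ |p i - q i| := mul_le_of_le_one_right (abs_nonneg _) (hg i)

end FiniteDistribution

theorem exp_neg_div_mem_Icc {x lam : ℝ} (hx : 0 ≤ x ∧ x ≤ 1) (hlam : 0 < lam) :
    Real.exp (-x / lam) ∈ Set.Icc (Real.exp (-(1 / lam))) 1 := by
  constructor
  · rw [Real.exp_le_exp, neg_div]
    gcongr
    exact hx.2
  · exact Real.exp_le_one_iff.mpr (div_nonpos_of_nonpos_of_nonneg (by linarith [hx.1]) hlam.le)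

theorem stmt14_general {O : Type*} [Fintype O]
    (P Q : O → ℝ) (hP0 : ∀ o, 0 ≤ P o) (hP1 : ∑ o, P o = 1)
    (hQ0 : ∀ o, 0 ≤ Q o) (hQ1 : ∑ o, Q o = 1)
    (f : O → ℝ) (hf : ∀ o, 0 ≤ f o ∧ f o ≤ 1)
    (lam : ℝ) (hlam : 0 < lam) :
    lam * (Real.log (∑ o, Q o * Real.exp (-f o / lam))
        - Real.log (∑ o, P o * Real.exp (-f o / lam)))
      ≤ lam * Real.exp (1 / lam) * ∑ o, |P o - Q o| := by
  set E : O → ℝ := fun o => Real.exp (-f o / lam)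
  have hE o : E o ∈ Set.Icc (Real.exp (-(1 / lam))) 1 := exp_neg_div_mem_Icc (hf o) hlam
  have hA := le_sum_mul_of_le hP0 hP1 fun o => (hE o).1
  have hB := le_sum_mul_of_le hQ0 hQ1 fun o => (hE o).1
  have hd0 : 0 ≤ ∑ o, |P o - Q o| := Finset.sum_nonneg fun o _ => abs_nonneg _
  have hdiff := sum_mul_sub_sum_mul_le_sum_abs_sub P Q E fun o =>
    abs_le.mpr ⟨by linarith [(hE o).1, Real.exp_pos (-(1 / lam))], (hE o).2⟩
  have hlog := Real.log_sub_log_le_div_of_sub_le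
    ((Real.exp_pos _).trans_le hA) ((Real.exp_pos _).trans_le hB) hdiff
  calc lam * (Real.log (∑ o, Q o * E o) - Real.log (∑ o, P o * E o))
      ≤ lam * ((∑ o, |P o - Q o|) / Real.exp (-(1 / lam))) := by
        gcongr
        exact hlog.trans (div_le_div_of_nonneg_left hd0 (Real.exp_pos _) hA)
    _ = lam * Real.exp (1 / lam) * ∑ o, |P o - Q o| := by
        rw [Real.exp_neg, div_inv_eq_mul]; ring

theorem stmt14 {O : Type*} [Fintype O] [Nonempty O]
    (P Q : O → ℝ) (hP0 : ∀ o, 0 ≤ P o) (hP1 : ∑ o, P o = 1)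
    (hQ0 : ∀ o, 0 ≤ Q o) (hQ1 : ∑ o, Q o = 1)
    (f : O → ℝ) (hf : ∀ o, 0 ≤ f o ∧ f o ≤ 1)
    (lam : ℝ) (hlam : 0 < lam) :
    lam * (Real.log (∑ o, Q o * Real.exp (-f o / lam))
        - Real.log (∑ o, P o * Real.exp (-f o / lam)))
      ≤ lam * Real.exp (1 / lam) * ∑ o, |P o - Q o| :=
  stmt14_general P Q hP0 hP1 hQ0 hQ1 f hf lam hlam
end

section
/- Let 𝒪 be a finite nonempty set, P, Q ∈ Δ(𝒪), V : 𝒪 → [0,1], and ξ ≥ 0. Then | inf { E_{P′}[V] : P′ ∈ Δ(𝒪), TV(P′, P) ≤ ξ } − inf { E_{Q′}[V] : Q′ ∈ Δ(𝒪), TV(Q′, Q) ≤ ξ } | ≤ ‖P − Q‖₁. -/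
/-!
Given `Q'` in the ξ-ball around `Q`, the triangle inequality gives `‖Q' - P‖₁ ≤ 2ξ + ‖P - Q‖₁`, so the
segment from `Q'` to `P` contains a distribution `P'` with `‖P' - P‖₁ ≤ 2ξ` and
`‖P' - Q'‖₁ ≤ ‖P - Q‖₁`. As `V` takes values in `[0, 1]`, `E_{P'}[V] ≤ E_{Q'}[V] + ‖P - Q‖₁`; hence the
infimum around `P` is at most the infimum around `Q` plus `‖P - Q‖₁`, and symmetrically.
-/

open Set AffineMap

theorem exists_mem_segment_dist_le_of_dist_le_add {E : Type*} [SeminormedAddCommGroup E]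
    [NormedSpace ℝ E] {x y : E} {a b : ℝ} (ha : 0 ≤ a) (hb : 0 ≤ b) (h : dist x y ≤ a + b) :
    ∃ z ∈ segment ℝ x y, dist z x ≤ a ∧ dist z y ≤ b := by
  rcases (add_nonneg ha hb).eq_or_lt with hab | hab
  · exact ⟨x, left_mem_segment ℝ x y, by simpa using ha, by linarith⟩
  set t := a / (a + b)
  have ht : t ∈ Icc (0 : ℝ) 1 := ⟨div_nonneg ha hab.le, div_le_one_of_le₀ (by linarith) hab.le⟩
  have ht' : 0 ≤ 1 - t := sub_nonneg.2 ht.2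
  have hta : t * (a + b) = a := div_mul_cancel₀ a hab.ne'
  refine ⟨lineMap x y t, lineMap_mem_segment ℝ x y ht, ?_, ?_⟩
  · rw [dist_lineMap_left, Real.norm_of_nonneg ht.1]
    calc t * dist x y ≤ t * (a + b) := by gcongr
      _ = a := hta
  · rw [dist_lineMap_right, Real.norm_of_nonneg ht']
    calc (1 - t) * dist x y ≤ (1 - t) * (a + b) := by gcongr
      _ = b := by linear_combination -hta

theorem Convex.exists_dist_le_of_dist_le {E : Type*} [SeminormedAddCommGroup E]
    [NormedSpace ℝ E] {S : Set E} (hS : Convex ℝ S) {x y y' : E} (hx : x ∈ S) (hy' : y' ∈ S)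
    {r : ℝ} (h : dist y' y ≤ r) : ∃ x' ∈ S, dist x' x ≤ r ∧ dist x' y' ≤ dist x y := by
  obtain ⟨x', hx', hxr, hy'x⟩ := exists_mem_segment_dist_le_of_dist_le_add (x := y') (y := x)
    (a := dist x y) (b := r) dist_nonneg (dist_nonneg.trans h)
    (by linarith [dist_triangle y' y x, dist_comm x y])
  exact ⟨x', hS.segment_subset hy' hx hx', hy'x, hxr⟩

theorem exists_mem_stdSimplex_sum_abs_sub_le {O : Type*} [Fintype O] {P Q Q' : O → ℝ}
    (hP : P ∈ stdSimplex ℝ O) (hQ' : Q' ∈ stdSimplex ℝ O) {r : ℝ}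
    (h : ∑ o, |Q' o - Q o| ≤ r) :
    ∃ P' ∈ stdSimplex ℝ O, ∑ o, |P' o - P o| ≤ r ∧ ∑ o, |P' o - Q' o| ≤ ∑ o, |P o - Q o| := by
  have hdist (f g : PiLp 1 fun _ : O => ℝ) : dist f g = ∑ o, |f o - g o| := by
    simp [PiLp.dist_eq_of_L1, Real.dist_eq]
  have hS : Convex ℝ (WithLp.ofLp ⁻¹' stdSimplex ℝ O : Set (PiLp 1 fun _ : O => ℝ)) :=
    (convex_stdSimplex ℝ O).linear_preimage (WithLp.linearEquiv 1 ℝ (O → ℝ)).toLinearMap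
  obtain ⟨P', hP', hP'P, hP'Q'⟩ := hS.exists_dist_le_of_dist_le (x := WithLp.toLp 1 P)
    (y := WithLp.toLp 1 Q) (y' := WithLp.toLp 1 Q') hP hQ' (by simpa [hdist] using h)
  exact ⟨P'.ofLp, hP', by simpa [hdist] using hP'P, by simpa [hdist] using hP'Q'⟩

theorem sum_mul_sub_sum_mul_le_sum_abs_sub_s15 {O : Type*} [Fintype O] (p q V : O → ℝ)
    (hV : ∀ o, |V o| ≤ 1) : ∑ o, p o * V o - ∑ o, q o * V o ≤ ∑ o, |p o - q o| := by
  rw [← Finset.sum_sub_distrib]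
  refine Finset.sum_le_sum fun o _ => ?_
  calc p o * V o - q o * V o ≤ |(p o - q o) * V o| := by rw [← sub_mul]; exact le_abs_self _
    _ = |p o - q o| * |V o| := abs_mul _ _
    _ ≤ |p o - q o| := mul_le_of_le_one_right (abs_nonneg _) (hV o)

def tvBallExpectations {O : Type*} [Fintype O] (P V : O → ℝ) (ξ : ℝ) : Set ℝ :=
  {w : ℝ | ∃ P' : O → ℝ, (∀ o, 0 ≤ P' o) ∧ (∑ o, P' o = 1) ∧
    (∑ o, |P' o - P o|) / 2 ≤ ξ ∧ w = ∑ o, P' o * V o}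

section tvBallExpectations

variable {O : Type*} [Fintype O] {P V : O → ℝ} {ξ : ℝ}

theorem sum_mul_mem_tvBallExpectations {P' : O → ℝ} (hP' : P' ∈ stdSimplex ℝ O)
    (hξ : ∑ o, |P' o - P o| ≤ 2 * ξ) : ∑ o, P' o * V o ∈ tvBallExpectations P V ξ :=
  ⟨P', hP'.1, hP'.2, by linarith, rfl⟩

theorem tvBallExpectations_nonempty (hP : P ∈ stdSimplex ℝ O) (hξ : 0 ≤ ξ) :
    (tvBallExpectations P V ξ).Nonempty :=
  ⟨_, sum_mul_mem_tvBallExpectations hP (by simpa using hξ)⟩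

theorem tvBallExpectations_bddBelow (hV : ∀ o, 0 ≤ V o) :
    BddBelow (tvBallExpectations P V ξ) := by
  refine ⟨0, ?_⟩
  rintro _ ⟨P', hP'0, -, -, rfl⟩
  exact Finset.sum_nonneg fun o _ => mul_nonneg (hP'0 o) (hV o)

theorem sInf_tvBallExpectations_le_add {Q : O → ℝ} (hP : P ∈ stdSimplex ℝ O)
    (hQ : Q ∈ stdSimplex ℝ O) (hV : ∀ o, 0 ≤ V o ∧ V o ≤ 1) (hξ : 0 ≤ ξ) :
    sInf (tvBallExpectations P V ξ) ≤ sInf (tvBallExpectations Q V ξ) + ∑ o, |P o - Q o| := by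
  rw [← sub_le_iff_le_add]
  refine le_csInf (tvBallExpectations_nonempty hQ hξ) ?_
  rintro _ ⟨Q', hQ'0, hQ'1, hQ'Q, rfl⟩
  obtain ⟨P', hP', hP'P, hP'Q'⟩ := exists_mem_stdSimplex_sum_abs_sub_le hP ⟨hQ'0, hQ'1⟩
    (r := 2 * ξ) (by linarith)
  have hV' (o : O) : |V o| ≤ 1 := abs_le.2 ⟨by linarith [(hV o).1], (hV o).2⟩
  have := csInf_le (tvBallExpectations_bddBelow fun o => (hV o).1)
    (sum_mul_mem_tvBallExpectations (V := V) hP' hP'P)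
  linarith [sum_mul_sub_sum_mul_le_sum_abs_sub_s15 P' Q' V hV']

end tvBallExpectations

theorem stmt15_general {O : Type*} [Fintype O]
    (P Q : O → ℝ) (hP0 : ∀ o, 0 ≤ P o) (hP1 : ∑ o, P o = 1)
    (hQ0 : ∀ o, 0 ≤ Q o) (hQ1 : ∑ o, Q o = 1)
    (V : O → ℝ) (hV : ∀ o, 0 ≤ V o ∧ V o ≤ 1)
    (ξ : ℝ) (hξ : 0 ≤ ξ) :
    |sInf {w : ℝ | ∃ P' : O → ℝ, (∀ o, 0 ≤ P' o) ∧ (∑ o, P' o = 1) ∧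
          (∑ o, |P' o - P o|) / 2 ≤ ξ ∧ w = ∑ o, P' o * V o}
        - sInf {w : ℝ | ∃ Q' : O → ℝ, (∀ o, 0 ≤ Q' o) ∧ (∑ o, Q' o = 1) ∧
          (∑ o, |Q' o - Q o|) / 2 ≤ ξ ∧ w = ∑ o, Q' o * V o}|
      ≤ ∑ o, |P o - Q o| := by
  show |sInf (tvBallExpectations P V ξ) - sInf (tvBallExpectations Q V ξ)| ≤ _
  have hP : P ∈ stdSimplex ℝ O := ⟨hP0, hP1⟩
  have hQ : Q ∈ stdSimplex ℝ O := ⟨hQ0, hQ1⟩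
  have hPQ := sInf_tvBallExpectations_le_add hP hQ hV hξ
  have hQP := sInf_tvBallExpectations_le_add hQ hP hV hξ
  rw [Finset.sum_congr rfl fun o _ => abs_sub_comm (Q o) (P o)] at hQP
  exact abs_sub_le_iff.2 ⟨by linarith, by linarith⟩

theorem stmt15 {O : Type*} [Fintype O] [Nonempty O]
    (P Q : O → ℝ) (hP0 : ∀ o, 0 ≤ P o) (hP1 : ∑ o, P o = 1)
    (hQ0 : ∀ o, 0 ≤ Q o) (hQ1 : ∑ o, Q o = 1)
    (V : O → ℝ) (hV : ∀ o, 0 ≤ V o ∧ V o ≤ 1)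
    (ξ : ℝ) (hξ : 0 ≤ ξ) :
    |sInf {w : ℝ | ∃ P' : O → ℝ, (∀ o, 0 ≤ P' o) ∧ (∑ o, P' o = 1) ∧
          (∑ o, |P' o - P o|) / 2 ≤ ξ ∧ w = ∑ o, P' o * V o}
        - sInf {w : ℝ | ∃ Q' : O → ℝ, (∀ o, 0 ≤ Q' o) ∧ (∑ o, Q' o = 1) ∧
          (∑ o, |Q' o - Q o|) / 2 ≤ ξ ∧ w = ∑ o, Q' o * V o}|
      ≤ ∑ o, |P o - Q o| :=
  stmt15_general P Q hP0 hP1 hQ0 hQ1 V hV ξ hξ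
end

section
/- Let 𝒳 be a finite nonempty set, P, Q ∈ Δ(𝒳), ε ≥ 0, and let P̄ : 𝒳 → [0,∞) satisfy ∑_{x∈𝒳} |P(x) − P̄(x)| ≤ ε and ∑_{x∈𝒳} √(P̄(x)·Q(x)) > 0. Then D_H²(P, Q) ≤ −log( ∑_{x∈𝒳} √(P̄(x)·Q(x)) ) + √ε. -/
/-!
For probability distributions, `D_H²(P, Q) = 1 - ∑ √(P Q)`. Replacing `P` by `P̄` in the
Bhattacharyya sum `∑ √(P Q)` changes it by `∑ (√P̄ - √P) √Q`, which by Cauchy–Schwarz is at most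
`√(∑ (√P̄ - √P)²) ≤ √(∑ |P̄ - P|) ≤ √ε`. Finally `1 - t ≤ -log t` for `t > 0`.
-/

open Finset

namespace Real

theorem sq_sqrt_sub_sqrt_le_abs_sub (a b : ℝ) : (√a - √b) ^ 2 ≤ |a - b| :=
  calc (√a - √b) ^ 2 = |√a - √b| * |√a - √b| := by rw [← sq_abs, sq]
    _ ≤ |√a - √b| * (√a + √b) := by
        gcongr
        simpa only [abs_of_nonneg (sqrt_nonneg _)] using abs_sub √a √b
    _ = |√a ^ 2 - √b ^ 2| := by
        rw [← abs_of_nonneg (add_nonneg (sqrt_nonneg a) (sqrt_nonneg b)), ← abs_mul]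
        ring_nf
    _ = |max a 0 - max b 0| := by rw [sq_sqrt', sq_sqrt']
    _ ≤ |a - b| := abs_max_sub_max_le_abs a b 0

variable {ι : Type*} (s : Finset ι)

theorem sum_sqrt_mul_sub_sum_sqrt_mul_le {P R Q : ι → ℝ} (hQ : ∀ i, 0 ≤ Q i) :
    ∑ i ∈ s, √(R i * Q i) - ∑ i ∈ s, √(P i * Q i)
      ≤ √(∑ i ∈ s, |R i - P i|) * √(∑ i ∈ s, Q i) :=
  calc ∑ i ∈ s, √(R i * Q i) - ∑ i ∈ s, √(P i * Q i)
        = ∑ i ∈ s, (√(R i) - √(P i)) * √(Q i) := by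
        simp only [sqrt_mul' _ (hQ _), ← sum_sub_distrib, sub_mul]
    _ ≤ √(∑ i ∈ s, (√(R i) - √(P i)) ^ 2) * √(∑ i ∈ s, √(Q i) ^ 2) :=
        sum_mul_le_sqrt_mul_sqrt s _ _
    _ ≤ √(∑ i ∈ s, |R i - P i|) * √(∑ i ∈ s, Q i) := by
        simp only [sq_sqrt (hQ _)]
        gcongr with i
        exact sq_sqrt_sub_sqrt_le_abs_sub _ _

theorem half_sum_sq_sqrt_sub_sqrt {P Q : ι → ℝ} (hP : ∀ i, 0 ≤ P i) (hQ : ∀ i, 0 ≤ Q i) :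
    1 / 2 * ∑ i ∈ s, (√(P i) - √(Q i)) ^ 2
      = (∑ i ∈ s, P i + ∑ i ∈ s, Q i) / 2 - ∑ i ∈ s, √(P i * Q i) := by
  have hterm (i : ι) : (√(P i) - √(Q i)) ^ 2 = P i + Q i - 2 * √(P i * Q i) := by
    rw [sub_sq, sq_sqrt (hP i), sq_sqrt (hQ i), sqrt_mul (hP i)]
    ring
  simp only [hterm, sum_sub_distrib, sum_add_distrib, ← mul_sum]
  ring

end Real

theorem stmt18_general {X : Type*} [Fintype X]
    (P Q : X → ℝ) (hP0 : ∀ x, 0 ≤ P x) (hP1 : ∑ x, P x = 1)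
    (hQ0 : ∀ x, 0 ≤ Q x) (hQ1 : ∑ x, Q x = 1)
    (ε : ℝ)
    (Pbar : X → ℝ)
    (hclose : ∑ x, |P x - Pbar x| ≤ ε)
    (hpos : 0 < ∑ x, Real.sqrt (Pbar x * Q x)) :
    1 / 2 * ∑ x, (Real.sqrt (P x) - Real.sqrt (Q x)) ^ 2
      ≤ -Real.log (∑ x, Real.sqrt (Pbar x * Q x)) + Real.sqrt ε := by
  have hellinger := Real.half_sum_sq_sqrt_sub_sqrt univ hP0 hQ0
  have perturb := Real.sum_sqrt_mul_sub_sum_sqrt_mul_le univ (P := P) (R := Pbar) hQ0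
  simp only [hQ1, Real.sqrt_one, mul_one, abs_sub_comm (Pbar _)] at perturb
  have hsqrt : √(∑ x, |P x - Pbar x|) ≤ √ε := Real.sqrt_le_sqrt hclose
  have hlog := Real.log_le_sub_one_of_pos hpos
  rw [hellinger, hP1, hQ1]
  linarith

theorem stmt18 {X : Type*} [Fintype X] [Nonempty X]
    (P Q : X → ℝ) (hP0 : ∀ x, 0 ≤ P x) (hP1 : ∑ x, P x = 1)
    (hQ0 : ∀ x, 0 ≤ Q x) (hQ1 : ∑ x, Q x = 1)
    (ε : ℝ) (hε : 0 ≤ ε)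
    (Pbar : X → ℝ) (hPbar : ∀ x, 0 ≤ Pbar x)
    (hclose : ∑ x, |P x - Pbar x| ≤ ε)
    (hpos : 0 < ∑ x, Real.sqrt (Pbar x * Q x)) :
    1 / 2 * ∑ x, (Real.sqrt (P x) - Real.sqrt (Q x)) ^ 2
      ≤ -Real.log (∑ x, Real.sqrt (Pbar x * Q x)) + Real.sqrt ε :=
  stmt18_general P Q hP0 hP1 hQ0 hQ1 ε Pbar hclose hpos
end

section
/- Let 𝒳 be a finite nonempty set with |𝒳| = M, let p* ∈ Δ(𝒳), let δ ∈ (0,1), let N ≥ 2 be an integer, and let 0 < p_min < δ/M². Let X₁, …, X_N be independent random variables each with law p*. Then with probability at least 1 − δ the following holds: every q ∈ Δ(𝒳) satisfying ∑_{n=1}^N (−log q(X_n)) ≤ ∑_{n=1}^N (−log p*(X_n)) also satisfies |{ n ∈ {1,…,N} : q(X_n) ≥ p_min }| ≥ N/2. -/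
/-!
Call a sample `ω` typical when `P ω = ∏ n, p*(ω n)` exceeds `M² p_min / M^N`. There are at most
`M^N` atypical samples, so they carry total mass at most `M² p_min < δ`. For a typical sample,
`(M^N P)² > (M² p_min)² ≥ (M² p_min)^N` because `M² p_min ≤ 1` and `N ≥ 2`, i.e. `P² > p_min^N`.
A `q` at least as likely as `p*` has `∏ n, q (ω n) ≥ P`; since `q ≤ 1`, that product is at most
`p_min^k`, where `k` counts the samples with `q (ω n) < p_min`. Hence `p_min^(2k) > p_min^N`, which
forces `2k < N`.
-/

open Classical
open scoped BigOperators

/-- `−log r`, valued in `EReal`, interpreted as `+∞` when `r ≤ 0`. -/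
noncomputable def negLogE (r : ℝ) : EReal :=
  if r ≤ 0 then ⊤ else ((-Real.log r : ℝ) : EReal)

open Finset

lemma negLogE_of_pos {r : ℝ} (h : 0 < r) : negLogE r = ((-Real.log r : ℝ) : EReal) := by
  simp [negLogE, not_le.2 h]

lemma negLogE_ne_bot (r : ℝ) : negLogE r ≠ ⊥ := by
  unfold negLogE
  split_ifs <;> simp

lemma negLogE_mul {a b : ℝ} (ha : 0 ≤ a) (hb : 0 ≤ b) :
    negLogE (a * b) = negLogE a + negLogE b := by
  have h0 : negLogE 0 = ⊤ := by simp [negLogE]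
  rcases ha.eq_or_lt with rfl | ha
  · rw [zero_mul, h0, EReal.top_add_of_ne_bot (negLogE_ne_bot b)]
  rcases hb.eq_or_lt with rfl | hb
  · rw [mul_zero, h0, EReal.add_top_of_ne_bot (negLogE_ne_bot a)]
  rw [negLogE_of_pos ha, negLogE_of_pos hb, negLogE_of_pos (mul_pos ha hb),
    Real.log_mul ha.ne' hb.ne', neg_add, EReal.coe_add]

lemma sum_negLogE {ι : Type*} (s : Finset ι) {r : ι → ℝ} (hr : ∀ i ∈ s, 0 ≤ r i) :
    ∑ i ∈ s, negLogE (r i) = negLogE (∏ i ∈ s, r i) := by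
  induction s using Finset.cons_induction with
  | empty => simp [negLogE_of_pos one_pos]
  | cons a s ha ih =>
    rw [forall_mem_cons] at hr
    rw [sum_cons, prod_cons, ih hr.2, negLogE_mul hr.1 (prod_nonneg hr.2)]

lemma le_of_negLogE_le {x y : ℝ} (hy : 0 < y) (h : negLogE x ≤ negLogE y) : y ≤ x := by
  rw [negLogE_of_pos hy] at h
  by_cases hx : x ≤ 0
  · simp [negLogE, hx] at h
  · rw [negLogE_of_pos (not_le.1 hx), EReal.coe_le_coe_iff, neg_le_neg_iff] at h
    exact (Real.log_le_log_iff hy (not_le.1 hx)).1 h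

lemma prod_le_pow_card_filter_lt {ι : Type*} (s : Finset ι) {f : ι → ℝ} {c : ℝ}
    (hf0 : ∀ i ∈ s, 0 ≤ f i) (hf1 : ∀ i ∈ s, f i ≤ 1) :
    ∏ i ∈ s, f i ≤ c ^ #{i ∈ s | f i < c} := by
  calc ∏ i ∈ s, f i ≤ ∏ i ∈ s with f i < c, f i :=
        prod_le_prod_of_subset_of_le_one (filter_subset _ _) hf0 fun i hi _ => hf1 i hi
    _ ≤ ∏ i ∈ s with f i < c, c :=
        prod_le_prod (fun i hi => hf0 i (mem_filter.1 hi).1) fun i hi => (mem_filter.1 hi).2.le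
    _ = c ^ #{i ∈ s | f i < c} := prod_const c

lemma half_card_le_card_filter_le_of_le_prod {ι : Type*} [Fintype ι] {f : ι → ℝ} {c t : ℝ}
    (hf0 : ∀ i, 0 ≤ f i) (hf1 : ∀ i, f i ≤ 1) (hc0 : 0 ≤ c) (hc1 : c ≤ 1)
    (hct : c ^ Fintype.card ι < t ^ 2) (ht0 : 0 ≤ t) (htf : t ≤ ∏ i, f i) :
    (Fintype.card ι : ℝ) / 2 ≤ #{i | c ≤ f i} := by
  by_contra! hfew
  set k := #{i | f i < c}
  have hsplit : #{i | c ≤ f i} + k = Fintype.card ι := by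
    simp only [k, ← not_le]
    exact card_filter_add_card_filter_not _
  have hk : Fintype.card ι ≤ 2 * k := by
    have : (Fintype.card ι : ℝ) ≤ 2 * k := by
      rw [← hsplit] at hfew ⊢; push_cast at hfew ⊢; linarith
    exact_mod_cast this
  have hprod : ∏ i, f i ≤ c ^ k := prod_le_pow_card_filter_lt _ (fun i _ => hf0 i) fun i _ => hf1 i
  have : t ^ 2 ≤ c ^ Fintype.card ι := calc
    t ^ 2 ≤ (c ^ k) ^ 2 := pow_le_pow_left₀ ht0 (htf.trans hprod) 2
    _ = c ^ (2 * k) := by ring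
    _ ≤ c ^ Fintype.card ι := pow_le_pow_of_le_one hc0 hc1 hk
  linarith

lemma pow_lt_sq_of_div_pow_lt {a c P : ℝ} {N : ℕ} (ha : 0 < a) (hc0 : 0 ≤ c) (hac : a ^ 2 * c ≤ 1)
    (hN : 2 ≤ N) (hP : a ^ 2 * c / a ^ N < P) : c ^ N < P ^ 2 := by
  have haN : 0 < a ^ N := pow_pos ha N
  rw [div_lt_iff₀' haN] at hP
  have hpow : (a ^ 2 * c) ^ N ≤ (a ^ 2 * c) ^ 2 := pow_le_pow_of_le_one (by positivity) hac hN
  have : a ^ (2 * N) * c ^ N < a ^ (2 * N) * P ^ 2 := calc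
    a ^ (2 * N) * c ^ N = (a ^ 2 * c) ^ N := by ring
    _ ≤ (a ^ 2 * c) ^ 2 := hpow
    _ < (a ^ N * P) ^ 2 := pow_lt_pow_left₀ hP (by positivity) two_ne_zero
    _ = a ^ (2 * N) * P ^ 2 := by ring
  exact lt_of_mul_lt_mul_left this (by positivity)

lemma one_sub_card_mul_le_sum_ite {Ω : Type*} [Fintype Ω] {P : Ω → ℝ} (hP1 : ∑ ω, P ω = 1)
    {G : Ω → Prop} [DecidablePred G] {ε : ℝ} (hε : 0 ≤ ε) (hbad : ∀ ω, ¬ G ω → P ω ≤ ε) :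
    1 - Fintype.card Ω * ε ≤ ∑ ω, if G ω then P ω else 0 := by
  have hsplit : ∑ ω, (if G ω then P ω else 0) + ∑ ω, (if G ω then 0 else P ω) = 1 := by
    rw [← sum_add_distrib, ← hP1]
    exact sum_congr rfl fun ω _ => by split_ifs <;> simp
  have hbad_sum : ∑ ω, (if G ω then 0 else P ω) ≤ Fintype.card Ω * ε := by
    rw [← nsmul_eq_mul, ← card_univ]
    exact sum_le_card_nsmul _ _ _ fun ω _ => by split_ifs with h; exacts [hε, hbad ω h]
  linarith

theorem stmt19_general {X : Type*} [Fintype X] [Nonempty X]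
    (pstar : X → ℝ) (hp0 : ∀ x, 0 ≤ pstar x) (hp1 : ∑ x, pstar x = 1)
    (M : ℕ) (hM : Fintype.card X = M)
    (δ : ℝ) (hδ1 : δ < 1)
    (N : ℕ) (hN : 2 ≤ N)
    (pmin : ℝ) (hpm0 : 0 < pmin) (hpm1 : pmin < δ / (M : ℝ) ^ 2) :
    1 - δ ≤ ∑ ω : Fin N → X,
      (if ∀ q : X → ℝ, (∀ x, 0 ≤ q x) → (∑ x, q x) = 1 →
            (∑ n : Fin N, negLogE (q (ω n))) ≤ (∑ n : Fin N, negLogE (pstar (ω n))) →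
            (N : ℝ) / 2 ≤ ((Finset.univ.filter fun n : Fin N => pmin ≤ q (ω n)).card : ℝ)
        then ∏ n : Fin N, pstar (ω n) else 0) := by
  have hM1 : (1 : ℝ) ≤ M := by rw [← hM]; exact_mod_cast Fintype.card_pos
  have hMpos : (0 : ℝ) < M := one_pos.trans_le hM1
  have hMδ : (M : ℝ) ^ 2 * pmin < δ := (lt_div_iff₀' (by positivity)).1 hpm1
  have hpm_le : pmin ≤ 1 := by nlinarith [one_le_pow₀ (n := 2) hM1]
  have hP1 : ∑ ω : Fin N → X, ∏ n, pstar (ω n) = 1 := by rw [← Fintype.sum_pow, hp1, one_pow]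
  refine le_trans ?_ (one_sub_card_mul_le_sum_ite hP1 (ε := M ^ 2 * pmin / M ^ N)
    (by positivity) fun ω hbad => ?_)
  · rw [Fintype.card_fun, Fintype.card_fin, hM, Nat.cast_pow,
      mul_div_cancel₀ _ (pow_ne_zero N hMpos.ne')]
    linarith
  by_contra! hlarge
  refine hbad fun q hq0 hq1 hlik => ?_
  have hPpos : 0 < ∏ n, pstar (ω n) := hlarge.trans' (by positivity)
  have hq1' : ∀ x, q x ≤ 1 := fun x => hq1 ▸ single_le_sum (fun y _ => hq0 y) (mem_univ x)
  rw [sum_negLogE _ fun n _ => hq0 _, sum_negLogE _ fun n _ => hp0 _] at hlik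
  have hsq := pow_lt_sq_of_div_pow_lt hMpos hpm0.le (by linarith) hN hlarge
  simpa using half_card_le_card_filter_le_of_le_prod (fun n => hq0 (ω n))
    (fun n => hq1' (ω n)) hpm0.le hpm_le (by simpa using hsq) hPpos.le
    (le_of_negLogE_le hPpos hlik)

theorem stmt19 {X : Type*} [Fintype X] [Nonempty X]
    (pstar : X → ℝ) (hp0 : ∀ x, 0 ≤ pstar x) (hp1 : ∑ x, pstar x = 1)
    (M : ℕ) (hM : Fintype.card X = M)
    (δ : ℝ) (hδ0 : 0 < δ) (hδ1 : δ < 1)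
    (N : ℕ) (hN : 2 ≤ N)
    (pmin : ℝ) (hpm0 : 0 < pmin) (hpm1 : pmin < δ / (M : ℝ) ^ 2) :
    1 - δ ≤ ∑ ω : Fin N → X,
      (if ∀ q : X → ℝ, (∀ x, 0 ≤ q x) → (∑ x, q x) = 1 →
            (∑ n : Fin N, negLogE (q (ω n))) ≤ (∑ n : Fin N, negLogE (pstar (ω n))) →
            (N : ℝ) / 2 ≤ ((Finset.univ.filter fun n : Fin N => pmin ≤ q (ω n)).card : ℝ)
        then ∏ n : Fin N, pstar (ω n) else 0) :=
  stmt19_general pstar hp0 hp1 M hM δ hδ1 N hN pmin hpm0 hpm1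
end
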